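/- Let γ be fixed with 63/64 < γ < 1, let θ > 0 be fixed, let 0 < λ₀ < 1 be fixed, and let λ₁, λ₂, λ₃ be nonzero real numbers. Set ε = X^{(63-64γ)/52 + θ} and Δ = X^{-12/13} log X. Suppose Θ : ℝ → ℂ satisfies |Θ(t)| ≤ 7ε/4 for all t. Then ∫_{Δ}^{∞} |Θ(t)| · |I₁(λ₁ t)| · |I₁(λ₂ t)| · |I₂(λ₃ t)| dt ≪ ε X^{1/2} / Δ. -/

import Mathlib

open MeasureTheory

/-- The integral `I_k(t) = ∫_{(λ₀X)^{1/k}}^{X^{1/k}} e(t y^k) dy`, for `k = 1, 2`. -/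
noncomputable def Ik (lam₀ X : ℝ) (k : ℕ) (t : ℝ) : ℂ :=
  ∫ y in ((lam₀ * X) ^ (1/(k:ℝ)))..(X ^ (1/(k:ℝ))),
    Complex.exp (2 * Real.pi * Complex.I * (t * y ^ k))

lemma norm_exp_eq_one (s b : ℝ) : ‖Complex.exp (2 * (Real.pi:ℂ) * Complex.I * (s:ℂ) * (b:ℂ))‖ = 1 := by
  rw [Complex.norm_exp]
  have : (2 * (Real.pi:ℂ) * Complex.I * (s:ℂ) * (b:ℂ)).re = 0 := by
    simp [Complex.mul_re, Complex.mul_im]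
  rw [this, Real.exp_zero]

lemma norm_I1_le (lam₀ X s : ℝ) (hs : s ≠ 0) : ‖Ik lam₀ X 1 s‖ ≤ 1/(Real.pi * |s|) := by
  have hc : (2 * (Real.pi:ℂ) * Complex.I * s) ≠ 0 := by
    simp [Real.pi_ne_zero, Complex.I_ne_zero, hs]
  have h1 : Ik lam₀ X 1 s =
      ∫ y in ((lam₀ * X) ^ (1/((1:ℕ)):ℝ))..(X ^ (1/((1:ℕ)):ℝ)),
        Complex.exp ((2 * (Real.pi:ℂ) * Complex.I * s) * y) := by
    unfold Ik
    congr 1; ext y; ring_nf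
  rw [h1, integral_exp_mul_complex hc, norm_div]
  have hcn : ‖(2 * (Real.pi:ℂ) * Complex.I * (s:ℂ))‖ = 2 * Real.pi * |s| := by
    simp [map_mul, abs_of_pos Real.pi_pos]
  rw [hcn]
  have h2 : ‖Complex.exp (2 * (Real.pi:ℂ) * Complex.I * s * ((X ^ (1/((1:ℕ)):ℝ) : ℝ) : ℂ)) -
      Complex.exp (2 * (Real.pi:ℂ) * Complex.I * s * (((lam₀*X) ^ (1/((1:ℕ)):ℝ) : ℝ) : ℂ))‖ ≤ 2 := by
    refine (norm_sub_le _ _).trans ?_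
    rw [norm_exp_eq_one, norm_exp_eq_one]; norm_num
  have hpos : 0 < 2 * Real.pi * |s| := by positivity
  calc _ ≤ 2 / (2 * Real.pi * |s|) := div_le_div_of_nonneg_right h2 hpos.le
    _ = 1/(Real.pi * |s|) := by field_simp

lemma norm_I2_le (lam₀ X s : ℝ) (h0 : 0 ≤ lam₀) (h1 : lam₀ ≤ 1) (hX : 0 ≤ X) :
    ‖Ik lam₀ X 2 s‖ ≤ X ^ ((1:ℝ)/2) := by
  unfold Ik
  have hb := intervalIntegral.norm_integral_le_of_norm_le_const (a := (lam₀ * X) ^ (1/((2:ℕ)):ℝ))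
    (b := X ^ (1/((2:ℕ)):ℝ)) (C := 1)
    (f := fun y : ℝ => Complex.exp (2 * Real.pi * Complex.I * ((s:ℂ) * (y:ℂ) ^ 2)))
    (fun x _ => by
      rw [Complex.norm_exp]
      have : (2 * (Real.pi:ℂ) * Complex.I * ((s:ℂ) * (x:ℂ) ^ 2)).re = 0 := by
        simp [Complex.mul_re, Complex.mul_im, sq]
      rw [this, Real.exp_zero])
  refine hb.trans ?_
  rw [one_mul]
  have hle : (lam₀ * X) ^ (1/((2:ℕ)):ℝ) ≤ X ^ (1/((2:ℕ)):ℝ) := by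
    apply Real.rpow_le_rpow (by positivity) ?_ (by norm_num)
    nlinarith
  have hnn : 0 ≤ (lam₀ * X) ^ (1/((2:ℕ)):ℝ) := Real.rpow_nonneg (by positivity) _
  rw [abs_of_nonneg (by linarith)]
  push_cast
  linarith

/-- If `|Θ(t)| ≤ 7ε/4` with `ε = X^{(63-64γ)/52+θ}`, then
`∫_{Δ}^{∞} |Θ(t)| |I₁(λ₁t)| |I₁(λ₂t)| |I₂(λ₃t)| dt ≪ ε X^{1/2} / Δ`,
with `Δ = X^{-12/13} log X`. -/
theorem Phi_bound (γ θ lam₀ lam₁ lam₂ lam₃ : ℝ) (hγ : 63/64 < γ) (hγ1 : γ < 1)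
    (hθ : 0 < θ) (h0 : 0 < lam₀) (h1 : lam₀ < 1)
    (hlam₁ : lam₁ ≠ 0) (hlam₂ : lam₂ ≠ 0) (hlam₃ : lam₃ ≠ 0) :
    ∃ C > 0, ∃ X₀ : ℝ, ∀ X ≥ X₀, ∀ Θ : ℝ → ℂ,
      (∀ t : ℝ, ‖Θ t‖ ≤ 7 * X ^ ((63 - 64*γ)/52 + θ) / 4) →
      (∫ t in Set.Ioi (X ^ (-12/13 : ℝ) * Real.log X),
          ‖Θ t‖ * ‖Ik lam₀ X 1 (lam₁ * t)‖ * ‖Ik lam₀ X 1 (lam₂ * t)‖ *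
            ‖Ik lam₀ X 2 (lam₃ * t)‖) ≤
        C * X ^ ((63 - 64*γ)/52 + θ) * X ^ ((1:ℝ)/2) / (X ^ (-12/13 : ℝ) * Real.log X) := by
  refine ⟨7 / (4 * Real.pi^2 * |lam₁| * |lam₂|), by positivity, 2, fun X hX Θ hΘ => ?_⟩
  have hX0 : (0:ℝ) < X := by linarith
  have hlog : 0 < Real.log X := Real.log_pos (by linarith)
  set Δ : ℝ := X ^ (-12/13 : ℝ) * Real.log X with hΔdef
  have hΔ : 0 < Δ := by positivity
  set ε : ℝ := X ^ ((63 - 64*γ)/52 + θ) with hεdef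
  have hε : 0 < ε := Real.rpow_pos_of_pos hX0 _
  set K : ℝ := 7 * ε / 4 * X ^ ((1:ℝ)/2) / (Real.pi^2 * |lam₁| * |lam₂|) with hKdef
  have hK : 0 ≤ K := by positivity
  have hgi : Integrable (fun t : ℝ => K * t ^ (-2:ℝ)) (volume.restrict (Set.Ioi Δ)) :=
    (integrableOn_Ioi_rpow_of_lt (by norm_num) hΔ).const_mul K
  have hmono : (∫ t in Set.Ioi Δ,
        ‖Θ t‖ * ‖Ik lam₀ X 1 (lam₁ * t)‖ * ‖Ik lam₀ X 1 (lam₂ * t)‖ *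
          ‖Ik lam₀ X 2 (lam₃ * t)‖) ≤ ∫ t in Set.Ioi Δ, K * t ^ (-2:ℝ) := by
    refine integral_mono_of_nonneg (Filter.Eventually.of_forall fun t => by positivity) hgi ?_
    rw [Filter.EventuallyLE, ae_restrict_iff' measurableSet_Ioi]
    refine Filter.Eventually.of_forall fun t ht => ?_
    have ht0 : 0 < t := lt_trans hΔ ht
    have hb1 : ‖Ik lam₀ X 1 (lam₁ * t)‖ ≤ 1 / (Real.pi * (|lam₁| * t)) := by
      have := norm_I1_le lam₀ X (lam₁ * t) (by positivity)
      rwa [abs_mul, abs_of_pos ht0] at this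
    have hb2 : ‖Ik lam₀ X 1 (lam₂ * t)‖ ≤ 1 / (Real.pi * (|lam₂| * t)) := by
      have := norm_I1_le lam₀ X (lam₂ * t) (by positivity)
      rwa [abs_mul, abs_of_pos ht0] at this
    have hb3 : ‖Ik lam₀ X 2 (lam₃ * t)‖ ≤ X ^ ((1:ℝ)/2) :=
      norm_I2_le lam₀ X (lam₃ * t) h0.le h1.le hX0.le
    have step : ‖Θ t‖ * ‖Ik lam₀ X 1 (lam₁ * t)‖ * ‖Ik lam₀ X 1 (lam₂ * t)‖ *
          ‖Ik lam₀ X 2 (lam₃ * t)‖ ≤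
        (7 * ε / 4) * (1 / (Real.pi * (|lam₁| * t))) * (1 / (Real.pi * (|lam₂| * t))) *
          X ^ ((1:ℝ)/2) := by
      gcongr <;> first | exact hΘ t | exact hb1 | exact hb2 | exact hb3
    refine step.trans (le_of_eq ?_)
    rw [Real.rpow_neg ht0.le, show (2:ℝ) = ((2:ℕ):ℝ) by norm_num, Real.rpow_natCast]
    have hπ := Real.pi_ne_zero
    have hl1 : |lam₁| ≠ 0 := abs_ne_zero.2 hlam₁
    have hl2 : |lam₂| ≠ 0 := abs_ne_zero.2 hlam₂
    field_simp [hKdef]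
    rw [hKdef]; field_simp; norm_num
  refine hmono.trans ?_
  rw [integral_const_mul K _, integral_Ioi_rpow_of_lt (by norm_num) hΔ]
  have hΔne : Δ ≠ 0 := ne_of_gt hΔ
  have hπ := Real.pi_ne_zero
  have hl1 : |lam₁| ≠ 0 := abs_ne_zero.2 hlam₁
  have hl2 : |lam₂| ≠ 0 := abs_ne_zero.2 hlam₂
  rw [show (-2:ℝ) + 1 = -1 by norm_num, Real.rpow_neg_one]
  rw [hKdef]
  field_simp
  ring_nf
  exact le_rfl
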